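/- For every nonnegative integer k and any x, x' ∈ ℝ^d, the degree-k Hermite kernel has the closed form ∑_{|α|=k} H_α(x)H_α(x') = (1/k!) · E[(x^⊤x' − Y^⊤Y' + i(x^⊤Y' + Y^⊤x'))^k], where Y, Y' are independent standard Gaussian vectors in ℝ^d. -/

import Mathlib

open MeasureTheory ProbabilityTheory

/-- Probabilist Hermite polynomials. -/
noncomputable def He : ℕ → ℝ → ℝ
  | 0, _ => 1
  | 1, x => x
  | n + 2, x => x * He (n + 1) x - (n + 1) * He n x

/-- Normalised Hermite polynomials `h n = He n / √(n!)`. -/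
noncomputable def hpoly (n : ℕ) (x : ℝ) : ℝ := He n x / Real.sqrt (Nat.factorial n)

/-- Multivariate Hermite polynomials `H_α(x) = ∏_a h_{α_a}(x_a)`. -/
noncomputable def Hmul {d : ℕ} (α : Fin d → ℕ) (x : Fin d → ℝ) : ℝ :=
  ∏ a, hpoly (α a) (x a)

/-- Standard Gaussian measure `N(0, I_d)` on `ℝ^d`. -/
noncomputable def gmeas (d : ℕ) : Measure (Fin d → ℝ) :=
  Measure.pi fun _ => gaussianReal 0 1

/-!
Writing `xᵀx' − YᵀY' + i(xᵀY' + Yᵀx') = ∑ₐ (xₐ + iYₐ)(x'ₐ + iY'ₐ)`, the multinomial theorem and the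
independence of the coordinates of `Y`, `Y'` reduce the claim to the one-dimensional identity
`E[(x + iZ)ⁿ] = Heₙ(x)` for `Z ∼ N(0, 1)`. By Stein's lemma `E[Z f(Z)] = E[f'(Z)]`, the left side
satisfies the three-term recurrence of `Heₙ`. The multinomial coefficient `k!/α!` is what turns
`He_α(x) He_α(x')` into `k! H_α(x) H_α(x')`.
-/

open Complex Finset
open scoped NNReal Polynomial

section GaussianIntegrationByParts

variable {E : Type*} [NormedAddCommGroup E] [NormedSpace ℝ E]

lemma integrable_gaussianReal_iff {μ : ℝ} {v : ℝ≥0} (hv : v ≠ 0) {f : ℝ → E} :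
    Integrable f (gaussianReal μ v) ↔ Integrable fun x ↦ gaussianPDFReal μ v x • f x := by
  rw [gaussianReal_of_var_ne_zero _ hv, integrable_withDensity_iff_integrable_smul'
    (measurable_gaussianPDF _ _) (ae_of_all _ fun _ ↦ gaussianPDF_lt_top)]
  simp only [toReal_gaussianPDF]

lemma hasDerivAt_gaussianPDFReal_zero_one (z : ℝ) :
    HasDerivAt (gaussianPDFReal 0 1) (-z * gaussianPDFReal 0 1 z) z := by
  have hpdf : gaussianPDFReal 0 1 = fun y ↦ (√(2 * Real.pi))⁻¹ * Real.exp (-y ^ 2 / 2) := by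
    ext y; simp [gaussianPDFReal]
  rw [hpdf]
  refine (((hasDerivAt_pow 2 z).neg.div_const 2).exp.const_mul _).congr_deriv ?_
  simp only [Pi.neg_apply]
  ring

theorem integral_smul_gaussianReal_eq_integral_deriv [CompleteSpace E] {f f' : ℝ → E}
    (hf : ∀ z, HasDerivAt f (f' z) z) (hf_int : Integrable f (gaussianReal 0 1))
    (hf'_int : Integrable f' (gaussianReal 0 1))
    (hzf_int : Integrable (fun z ↦ z • f z) (gaussianReal 0 1)) :
    ∫ z, z • f z ∂gaussianReal 0 1 = ∫ z, f' z ∂gaussianReal 0 1 := by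
  rw [integrable_gaussianReal_iff one_ne_zero] at hf_int hf'_int hzf_int
  have hderiv : ∀ z, HasDerivAt (fun z ↦ gaussianPDFReal 0 1 z • f z)
      (gaussianPDFReal 0 1 z • f' z - gaussianPDFReal 0 1 z • z • f z) z := fun z ↦ by
    refine ((hasDerivAt_gaussianPDFReal_zero_one z).smul (hf z)).congr_deriv ?_
    rw [smul_smul, neg_mul, neg_smul, mul_comm]; abel
  have hzero := integral_eq_zero_of_hasDerivAt_of_integrable hderiv (hf'_int.sub hzf_int) hf_int
  rw [integral_sub hf'_int hzf_int, sub_eq_zero] at hzero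
  rw [integral_gaussianReal_eq_integral_smul one_ne_zero,
    integral_gaussianReal_eq_integral_smul one_ne_zero, hzero]

end GaussianIntegrationByParts

lemma integrable_pow_gaussianReal (μ : ℝ) (v : ℝ≥0) (n : ℕ) :
    Integrable (fun z : ℝ ↦ z ^ n) (gaussianReal μ v) :=
  integrable_pow_of_mem_interior_integrableExpSet (X := id)
    (by simp [integrableExpSet_id_gaussianReal]) n

lemma integrable_eval_gaussianReal (p : ℂ[X]) (μ : ℝ) (v : ℝ≥0) :
    Integrable (fun z : ℝ ↦ p.eval (z : ℂ)) (gaussianReal μ v) := by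
  simp_rw [Polynomial.eval_eq_sum_range]
  refine integrable_finsetSum _ fun i _ ↦ ?_
  simp_rw [← ofReal_pow]
  exact (integrable_pow_gaussianReal μ v i).ofReal.const_mul _

open Polynomial in
lemma integrable_ofReal_add_I_mul_pow_gaussianReal {μ : ℝ} {v : ℝ≥0} (x : ℝ) (n : ℕ) :
    Integrable (fun z : ℝ ↦ ((x : ℂ) + I * z) ^ n) (gaussianReal μ v) := by
  have h := integrable_eval_gaussianReal ((C (x : ℂ) + C I * X) ^ n) μ v
  simp only [eval_pow, eval_add, eval_mul, eval_C, eval_X] at h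
  exact h

open Polynomial in
lemma integrable_ofReal_mul_ofReal_add_I_mul_pow_gaussianReal {μ : ℝ} {v : ℝ≥0} (x : ℝ)
    (n : ℕ) : Integrable (fun z : ℝ ↦ (z : ℂ) * ((x : ℂ) + I * z) ^ n) (gaussianReal μ v) := by
  have h := integrable_eval_gaussianReal (X * (C (x : ℂ) + C I * X) ^ n) μ v
  simp only [eval_pow, eval_add, eval_mul, eval_C, eval_X] at h
  exact h

-- At `n = 0` the truncated `n - 1` is harmless: it is multiplied by `n`.
lemma integral_ofReal_mul_ofReal_add_I_mul_pow_gaussianReal (x : ℝ) (n : ℕ) :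
    ∫ z, (z : ℂ) * ((x : ℂ) + I * z) ^ n ∂gaussianReal 0 1
      = n * I * ∫ z, ((x : ℂ) + I * z) ^ (n - 1) ∂gaussianReal 0 1 := by
  have hderiv (z : ℝ) : HasDerivAt (fun z : ℝ ↦ ((x : ℂ) + I * z) ^ n)
      (n * I * ((x : ℂ) + I * z) ^ (n - 1)) z := by
    exact ((((hasDerivAt_id (z : ℂ)).const_mul I).const_add (x : ℂ)).pow n).comp_ofReal
      |>.congr_deriv (by simp; ring)
  simp_rw [← real_smul]
  rw [integral_smul_gaussianReal_eq_integral_deriv hderiv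
    (integrable_ofReal_add_I_mul_pow_gaussianReal x n)
    ((integrable_ofReal_add_I_mul_pow_gaussianReal x (n - 1)).const_mul _)
    (by simpa only [real_smul] using integrable_ofReal_mul_ofReal_add_I_mul_pow_gaussianReal x n),
    integral_const_mul]

lemma integral_ofReal_add_I_mul_pow_succ_gaussianReal (x : ℝ) (n : ℕ) :
    ∫ z, ((x : ℂ) + I * z) ^ (n + 1) ∂gaussianReal 0 1
      = x * ∫ z, ((x : ℂ) + I * z) ^ n ∂gaussianReal 0 1
        - n * ∫ z, ((x : ℂ) + I * z) ^ (n - 1) ∂gaussianReal 0 1 := by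
  have hsplit : (fun z : ℝ ↦ ((x : ℂ) + I * z) ^ (n + 1))
      = fun z : ℝ ↦ x * ((x : ℂ) + I * z) ^ n + I * ((z : ℂ) * ((x : ℂ) + I * z) ^ n) := by
    ext z; ring
  rw [hsplit, integral_add ((integrable_ofReal_add_I_mul_pow_gaussianReal x n).const_mul _)
    ((integrable_ofReal_mul_ofReal_add_I_mul_pow_gaussianReal x n).const_mul _),
    integral_const_mul, integral_const_mul,
    integral_ofReal_mul_ofReal_add_I_mul_pow_gaussianReal]
  linear_combination (n * ∫ z, ((x : ℂ) + I * z) ^ (n - 1) ∂gaussianReal 0 1) * I_mul_I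

theorem integral_ofReal_add_I_mul_pow_gaussianReal (x : ℝ) (n : ℕ) :
    ∫ z, ((x : ℂ) + I * z) ^ n ∂gaussianReal 0 1 = He n x := by
  induction n using Nat.twoStepInduction with
  | zero => simp [He]
  | one => simpa [He] using integral_ofReal_add_I_mul_pow_succ_gaussianReal x 0
  | more n ih ih' =>
    rw [integral_ofReal_add_I_mul_pow_succ_gaussianReal, ih', Nat.add_sub_cancel, ih, He]
    push_cast
    ring

lemma tsum_subtype_sum_eq_sum_piAntidiag {ι M : Type*} [Fintype ι] [DecidableEq ι]
    [AddCommMonoid M] [TopologicalSpace M] (k : ℕ) (f : (ι → ℕ) → M) :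
    ∑' α : {α : ι → ℕ // ∑ a, α a = k}, f α = ∑ α ∈ piAntidiag univ k, f α := by
  rw [← Finset.tsum_subtype (piAntidiag univ k) f]
  exact (Equiv.subtypeEquivRight (p := fun α : ι → ℕ ↦ ∑ a, α a = k)
    (q := (· ∈ piAntidiag univ k)) fun α ↦ by simp [mem_piAntidiag]).tsum_eq
    fun α ↦ f α

lemma integral_integral_sum_mul_mul {α β ι : Type*} [MeasurableSpace α] [MeasurableSpace β]
    {μ : Measure α} {ν : Measure β} (s : Finset ι) (c : ι → ℂ) {f : ι → α → ℂ} {g : ι → β → ℂ}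
    (hf : ∀ i, Integrable (f i) μ) (hg : ∀ i, Integrable (g i) ν) :
    ∫ y, ∫ y', ∑ i ∈ s, c i * (f i y * g i y') ∂ν ∂μ
      = ∑ i ∈ s, c i * ((∫ y, f i y ∂μ) * ∫ y', g i y' ∂ν) := by
  calc ∫ y, ∫ y', ∑ i ∈ s, c i * (f i y * g i y') ∂ν ∂μ
      = ∫ y, ∑ i ∈ s, (c i * ∫ y', g i y' ∂ν) * f i y ∂μ := by
        congr with y
        rw [integral_finsetSum _ fun i _ ↦ ((hg i).const_mul (f i y)).const_mul (c i)]
        congr with i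
        rw [integral_const_mul, integral_const_mul]
        ring
    _ = ∑ i ∈ s, c i * ((∫ y, f i y ∂μ) * ∫ y', g i y' ∂ν) := by
        rw [integral_finsetSum _ fun i _ ↦ (hf i).const_mul _]
        congr with i
        rw [integral_const_mul]
        ring

section MultivariateHermite

variable {d : ℕ}

lemma integral_prod_ofReal_add_I_mul_pow_gmeas (α : Fin d → ℕ) (x : Fin d → ℝ) :
    ∫ y, ∏ a, ((x a : ℂ) + I * y a) ^ α a ∂gmeas d = ∏ a, (He (α a) (x a) : ℂ) := by
  rw [gmeas, integral_fintype_prod_eq_prod (fun a (z : ℝ) ↦ ((x a : ℂ) + I * z) ^ α a)]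
  simp only [integral_ofReal_add_I_mul_pow_gaussianReal]

lemma integrable_prod_ofReal_add_I_mul_pow_gmeas (α : Fin d → ℕ) (x : Fin d → ℝ) :
    Integrable (fun y ↦ ∏ a, ((x a : ℂ) + I * y a) ^ α a) (gmeas d) :=
  Integrable.fintype_prod fun a ↦ integrable_ofReal_add_I_mul_pow_gaussianReal (x a) (α a)

lemma sum_ofReal_add_I_mul_mul_ofReal_add_I_mul (x x' y y' : Fin d → ℝ) :
    ∑ a, ((x a : ℂ) + I * y a) * ((x' a : ℂ) + I * y' a)
      = ((∑ a, x a * x' a : ℝ) : ℂ) - ((∑ a, y a * y' a : ℝ) : ℂ)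
        + I * (((∑ a, x a * y' a : ℝ) : ℂ) + ((∑ a, y a * x' a : ℝ) : ℂ)) := by
  push_cast
  simp only [← sum_add_distrib, mul_sum, ← sum_sub_distrib]
  refine sum_congr rfl fun a _ ↦ ?_
  linear_combination (y a * y' a : ℂ) * I_mul_I

lemma integral_integral_sum_mul_pow_gmeas (k : ℕ) (x x' : Fin d → ℝ) :
    ∫ y, ∫ y', (∑ a, ((x a : ℂ) + I * y a) * ((x' a : ℂ) + I * y' a)) ^ k ∂gmeas d ∂gmeas d
      = ((∑ α ∈ piAntidiag univ k, (Nat.multinomial univ α : ℝ)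
          * ((∏ a, He (α a) (x a)) * ∏ a, He (α a) (x' a)) : ℝ) : ℂ) := by
  simp_rw [sum_pow_eq_sum_piAntidiag, mul_pow, prod_mul_distrib]
  rw [integral_integral_sum_mul_mul _ _ (fun α ↦ integrable_prod_ofReal_add_I_mul_pow_gmeas α x)
    (fun α ↦ integrable_prod_ofReal_add_I_mul_pow_gmeas α x')]
  simp only [integral_prod_ofReal_add_I_mul_pow_gmeas]
  push_cast
  rfl

lemma Hmul_mul_Hmul (α : Fin d → ℕ) (x x' : Fin d → ℝ) :
    Hmul α x * Hmul α x' = (Nat.multinomial univ α : ℝ) / (∑ a, α a).factorial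
      * ((∏ a, He (α a) (x a)) * ∏ a, He (α a) (x' a)) := by
  have hfac : (∏ a, ((α a).factorial : ℝ)) * Nat.multinomial univ α = (∑ a, α a).factorial := by
    exact_mod_cast Nat.multinomial_spec univ α
  have hprod : Hmul α x * Hmul α x'
      = (∏ a, He (α a) (x a)) * (∏ a, He (α a) (x' a)) / ∏ a, ((α a).factorial : ℝ) := by
    simp only [Hmul, hpoly, ← prod_mul_distrib, ← prod_div_distrib]
    refine prod_congr rfl fun a _ ↦ ?_
    rw [div_mul_div_comm, Real.mul_self_sqrt (Nat.cast_nonneg _)]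
  rw [hprod, ← hfac]
  have hprod_ne : (∏ a, ((α a).factorial : ℝ)) ≠ 0 := prod_ne_zero_iff.2 fun a _ ↦ by positivity
  have hmult_ne : (Nat.multinomial univ α : ℝ) ≠ 0 :=
    Nat.cast_ne_zero.2 (Nat.multinomial_pos _ _).ne'
  field_simp

end MultivariateHermite

/-- Closed form of the degree-`k` Hermite kernel:
`∑_{|α|=k} H_α(x)H_α(x') = (1/k!) E[(xᵀx' − YᵀY' + i(xᵀY' + Yᵀx'))^k]`
with `Y, Y' ∼ N(0, I_d)` independent. -/
theorem hermite_kernel_closed_form (d k : ℕ) (x x' : Fin d → ℝ) :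
    ∑' α : {α : Fin d → ℕ // ∑ a, α a = k}, Hmul α.1 x * Hmul α.1 x'
      = (1 / (Nat.factorial k : ℝ)) *
        (∫ y : Fin d → ℝ, ∫ y' : Fin d → ℝ,
          (((∑ a, x a * x' a : ℝ) : ℂ) - ((∑ a, y a * y' a : ℝ) : ℂ)
            + Complex.I * (((∑ a, x a * y' a : ℝ) : ℂ) + ((∑ a, y a * x' a : ℝ) : ℂ))) ^ k
          ∂(gmeas d) ∂(gmeas d)).re := by
  simp_rw [← sum_ofReal_add_I_mul_mul_ofReal_add_I_mul]
  rw [integral_integral_sum_mul_pow_gmeas, ofReal_re,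
    tsum_subtype_sum_eq_sum_piAntidiag k fun α ↦ Hmul α x * Hmul α x', mul_sum]
  refine sum_congr rfl fun α hα ↦ ?_
  rw [Hmul_mul_Hmul, (mem_piAntidiag.1 hα).1]
  ring
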